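/- Let Θ ⊂ ℝ² be an annulus with inner radius R₁ > 0 and outer radius R₂ > R₁, centered at the origin. Then for every smooth function u on the closure of Θ, the trace on the inner circle ∂Θ₁ = {|x| = R₁} satisfies R₁(R₂ − R₁)‖u‖²_{L²(∂Θ₁)} ≤ (R₂ + 2(R₂ − R₁))‖u‖²_{L²(Θ)} + 2(R₂ − R₁)R₂ ‖u‖_{L²(Θ)} ‖∇u‖_{L²(Θ)}. -/

import Mathlib

open MeasureTheory Real Set

open MeasureTheory Real Set


noncomputable def myE : ℝ × ℝ ≃ᵐ EuclideanSpace ℝ (Fin 2) :=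
  (MeasurableEquiv.finTwoArrow).symm.trans (MeasurableEquiv.toLp 2 (Fin 2 → ℝ))

lemma myE_apply (x y : ℝ) : myE (x, y) = (WithLp.equiv 2 (Fin 2 → ℝ)).symm ![x, y] := rfl

lemma myE_norm (x y : ℝ) : ‖myE (x, y)‖ = Real.sqrt (x ^ 2 + y ^ 2) := by
  rw [myE_apply, EuclideanSpace.norm_eq]
  simp [Fin.sum_univ_two, sq_abs]

lemma myE_smul (s x y : ℝ) : myE (s * x, s * y) = s • myE (x, y) := by
  rw [myE_apply, myE_apply]
  have : ![s * x, s * y] = s • ![x, y] := by funext i; fin_cases i <;> simp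
  rw [this]; rfl

lemma myE_cont : Continuous fun p : ℝ × ℝ => myE p := by
  have : (fun p : ℝ × ℝ => myE p)
      = fun p : ℝ × ℝ => (WithLp.equiv 2 (Fin 2 → ℝ)).symm ![p.1, p.2] := by
    funext p; rw [← myE_apply]
  rw [this]
  refine (PiLp.continuous_toLp 2 (fun _ : Fin 2 => ℝ)).comp ?_
  refine continuous_pi fun i => ?_
  fin_cases i
  · exact continuous_fst
  · exact continuous_snd

lemma norm_v (θ : ℝ) : ‖myE (Real.cos θ, Real.sin θ)‖ = 1 := by
  rw [myE_norm]
  rw [show Real.cos θ ^ 2 + Real.sin θ ^ 2 = 1 by rw [add_comm]; exact Real.sin_sq_add_cos_sq θ]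
  exact Real.sqrt_one

lemma ray_hasDerivAt (u : EuclideanSpace ℝ (Fin 2) → ℝ) (hu : ContDiff ℝ (⊤ : ℕ∞) u) (θ r : ℝ) :
    HasDerivAt (fun s => u (myE (s * Real.cos θ, s * Real.sin θ)))
      ((fderiv ℝ u (myE (r * Real.cos θ, r * Real.sin θ))) (myE (Real.cos θ, Real.sin θ))) r := by
  have h1 : HasDerivAt (fun s : ℝ => s • myE (Real.cos θ, Real.sin θ))
      (myE (Real.cos θ, Real.sin θ)) r := by
    simpa using (hasDerivAt_id r).smul_const (myE (Real.cos θ, Real.sin θ))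
  have h2 : (fun s : ℝ => u (myE (s * Real.cos θ, s * Real.sin θ)))
      = fun s : ℝ => u (s • myE (Real.cos θ, Real.sin θ)) := by
    funext s; rw [myE_smul]
  rw [h2]
  have hd := ((hu.differentiable (by simp)) (r • myE (Real.cos θ, Real.sin θ))).hasFDerivAt
  have := hd.comp_hasDerivAt r h1
  rw [← myE_smul] at this
  exact this

lemma ray_bound (u : EuclideanSpace ℝ (Fin 2) → ℝ) (hu : ContDiff ℝ (⊤ : ℕ∞) u)
    (R₁ R₂ : ℝ) (hR₁ : 0 < R₁) (θ r : ℝ) (hr1 : R₁ ≤ r) (hr2 : r ≤ R₂) :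
    u (myE (R₁ * Real.cos θ, R₁ * Real.sin θ)) ^ 2
      ≤ u (myE (r * Real.cos θ, r * Real.sin θ)) ^ 2
        + ∫ s in R₁..R₂, 2 * |u (myE (s * Real.cos θ, s * Real.sin θ))|
            * ‖fderiv ℝ u (myE (s * Real.cos θ, s * Real.sin θ))‖ := by
  set c : ℝ → EuclideanSpace ℝ (Fin 2) := fun s => myE (s * Real.cos θ, s * Real.sin θ) with hc
  have hccont : Continuous c := by
    apply myE_cont.comp
    exact (continuous_id.mul continuous_const).prodMk (continuous_id.mul continuous_const)
  set g : ℝ → ℝ := fun s => u (c s) with hg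
  set g' : ℝ → ℝ := fun s => (fderiv ℝ u (c s)) (myE (Real.cos θ, Real.sin θ)) with hg'
  have hgc : Continuous g := hu.continuous.comp hccont
  have hg'c : Continuous g' := by
    exact ((hu.continuous_fderiv (by simp)).comp hccont).clm_apply continuous_const
  have hderiv : ∀ s, HasDerivAt (fun t => g t ^ 2) (2 * g s * g' s) s := by
    intro s
    have := (ray_hasDerivAt u hu θ s).fun_pow 2
    simpa [hg, hg', hc, mul_comm, mul_assoc, mul_left_comm] using this
  have hint : IntervalIntegrable (fun s => 2 * g s * g' s) volume R₁ r :=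
    (((continuous_const.mul hgc)).mul hg'c).intervalIntegrable _ _
  have hftc : ∫ s in R₁..r, 2 * g s * g' s = g r ^ 2 - g R₁ ^ 2 :=
    intervalIntegral.integral_eq_sub_of_hasDerivAt (fun s _ => hderiv s) hint
  have habs : ∀ s, |2 * g s * g' s| ≤ 2 * |g s| * ‖fderiv ℝ u (c s)‖ := by
    intro s
    rw [abs_mul, abs_mul, abs_two]
    have h1 : |g' s| ≤ ‖fderiv ℝ u (c s)‖ := by
      have := (fderiv ℝ u (c s)).le_opNorm (myE (Real.cos θ, Real.sin θ))
      rw [norm_v] at this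
      simpa using this
    have := mul_le_mul_of_nonneg_left h1 (by positivity : (0:ℝ) ≤ 2 * |g s|)
    linarith [this]
  have key : -(∫ s in R₁..r, 2 * g s * g' s)
      ≤ ∫ s in R₁..R₂, 2 * |g s| * ‖fderiv ℝ u (c s)‖ := by
    have h1 : -(∫ s in R₁..r, 2 * g s * g' s) ≤ |∫ s in R₁..r, 2 * g s * g' s| :=
      neg_le_abs _
    have h2 : |∫ s in R₁..r, 2 * g s * g' s| ≤ ∫ s in R₁..r, |2 * g s * g' s| :=
      intervalIntegral.abs_integral_le_integral_abs hr1
    have h3 : (∫ s in R₁..r, |2 * g s * g' s|)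
        ≤ ∫ s in R₁..r, 2 * |g s| * ‖fderiv ℝ u (c s)‖ := by
      apply intervalIntegral.integral_mono_on hr1
      · exact hint.abs
      · exact (((continuous_const.mul hgc.abs)).mul
          (((hu.continuous_fderiv (by simp)).comp hccont).norm)).intervalIntegrable _ _
      · exact fun s _ => habs s
    have h4 : (∫ s in R₁..r, 2 * |g s| * ‖fderiv ℝ u (c s)‖)
        ≤ ∫ s in R₁..R₂, 2 * |g s| * ‖fderiv ℝ u (c s)‖ := by
      apply intervalIntegral.integral_mono_interval le_rfl hr1 hr2
      · filter_upwards with s; positivity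
      · exact (((continuous_const.mul hgc.abs)).mul
          (((hu.continuous_fderiv (by simp)).comp hccont).norm)).intervalIntegrable _ _
    linarith
  have : g R₁ ^ 2 = g r ^ 2 - ∫ s in R₁..r, 2 * g s * g' s := by rw [hftc]; ring
  rw [show u (myE (R₁ * Real.cos θ, R₁ * Real.sin θ)) ^ 2 = g R₁ ^ 2 from rfl,
    show u (myE (r * Real.cos θ, r * Real.sin θ)) ^ 2 = g r ^ 2 from rfl]
  linarith [key, this.le]

lemma myE_mp : MeasurePreserving myE :=
  ((PiLp.volume_preserving_toLp (Fin 2))).comp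
    ((volume_preserving_finTwoArrow ℝ).symm)

lemma polar_set_integral (R₁ R₂ : ℝ) (hR₁ : 0 < R₁)
    (f : EuclideanSpace ℝ (Fin 2) → ℝ) :
    ∫ x in {x : EuclideanSpace ℝ (Fin 2) | R₁ < ‖x‖ ∧ ‖x‖ < R₂}, f x
      = ∫ p in Ioo R₁ R₂ ×ˢ Ioo (-π) π, p.1 * f (myE (p.1 * Real.cos p.2, p.1 * Real.sin p.2)) := by
  set Θ : Set (EuclideanSpace ℝ (Fin 2)) := {x | R₁ < ‖x‖ ∧ ‖x‖ < R₂}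
  have hmeas : MeasurableSet Θ := by
    have : Θ = (fun x : EuclideanSpace ℝ (Fin 2) => ‖x‖) ⁻¹' (Ioo R₁ R₂) := rfl
    rw [this]
    exact measurable_norm measurableSet_Ioo
  have h1 : ∫ x in Θ, f x = ∫ x, Θ.indicator f x := (integral_indicator hmeas).symm
  have h2 : ∫ x, Θ.indicator f x = ∫ p, Θ.indicator f (myE p) :=
    (myE_mp.integral_comp myE.measurableEmbedding _).symm
  have h3 : ∫ p, Θ.indicator f (myE p)
      = ∫ p in polarCoord.target, p.1 • Θ.indicator f (myE (polarCoord.symm p)) :=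
    (integral_comp_polarCoord_symm fun p => Θ.indicator f (myE p)).symm
  have htarget : polarCoord.target = Ioi (0:ℝ) ×ˢ Ioo (-π) π := rfl
  have h4 : ∫ p in polarCoord.target, p.1 • Θ.indicator f (myE (polarCoord.symm p))
      = ∫ p in polarCoord.target,
          (Ioo R₁ R₂ ×ˢ Ioo (-π) π).indicator
            (fun p : ℝ × ℝ => p.1 * f (myE (p.1 * Real.cos p.2, p.1 * Real.sin p.2))) p := by
    apply setIntegral_congr_fun polarCoord.open_target.measurableSet
    intro p hp
    rw [htarget] at hp
    obtain ⟨hp1, hp2⟩ := hp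
    have hp1' : 0 < p.1 := hp1
    have hnorm : ‖myE (polarCoord.symm p)‖ = p.1 := by
      rw [polarCoord_symm_apply]
      rw [myE_norm]
      have : (p.1 * Real.cos p.2) ^ 2 + (p.1 * Real.sin p.2) ^ 2 = p.1 ^ 2 := by
        have := Real.sin_sq_add_cos_sq p.2; nlinarith
      rw [this, Real.sqrt_sq hp1'.le]
    by_cases hmem : p.1 ∈ Ioo R₁ R₂
    · have hin : myE (polarCoord.symm p) ∈ Θ := by
        refine ⟨?_, ?_⟩ <;> rw [hnorm]
        exacts [hmem.1, hmem.2]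
      have hin2 : p ∈ Ioo R₁ R₂ ×ˢ Ioo (-π) π := ⟨hmem, hp2⟩
      show p.1 • Θ.indicator f (myE (polarCoord.symm p)) = _
      rw [Set.indicator_of_mem hin, Set.indicator_of_mem hin2, polarCoord_symm_apply]
      simp [smul_eq_mul]
    · have hout : myE (polarCoord.symm p) ∉ Θ := by
        rw [Set.mem_setOf_eq, hnorm]; exact fun h => hmem ⟨h.1, h.2⟩
      have hout2 : p ∉ Ioo R₁ R₂ ×ˢ Ioo (-π) π := fun h => hmem h.1
      show p.1 • Θ.indicator f (myE (polarCoord.symm p)) = _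
      rw [Set.indicator_of_notMem hout, Set.indicator_of_notMem hout2, smul_zero]
  have h5 : ∫ p in polarCoord.target,
        (Ioo R₁ R₂ ×ˢ Ioo (-π) π).indicator
          (fun p : ℝ × ℝ => p.1 * f (myE (p.1 * Real.cos p.2, p.1 * Real.sin p.2))) p
      = ∫ p in polarCoord.target ∩ (Ioo R₁ R₂ ×ˢ Ioo (-π) π),
          p.1 * f (myE (p.1 * Real.cos p.2, p.1 * Real.sin p.2)) := by
    exact setIntegral_indicator ((measurableSet_Ioo).prod measurableSet_Ioo)
  have h6 : polarCoord.target ∩ (Ioo R₁ R₂ ×ˢ Ioo (-π) π) = Ioo R₁ R₂ ×ˢ Ioo (-π) π := by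
    rw [htarget, Set.prod_inter_prod]
    congr 1
    · exact Set.inter_eq_right.mpr (fun x hx => lt_trans hR₁ hx.1)
    · exact Set.inter_self _
  rw [h1, h2, h3, h4, h5, h6]



lemma cont_integrableOn_prod {f : ℝ × ℝ → ℝ} (hf : Continuous f) (a b c d : ℝ) :
    IntegrableOn f (Ioo a b ×ˢ Ioo c d) := by
  have hsub : Ioo a b ×ˢ Ioo c d ⊆ Icc a b ×ˢ Icc c d :=
    Set.prod_mono Ioo_subset_Icc_self Ioo_subset_Icc_self
  exact (hf.continuousOn.integrableOn_compact (isCompact_Icc.prod isCompact_Icc)).mono_set hsub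

lemma swap_fubini {f : ℝ × ℝ → ℝ} (hf : Continuous f) (a b c d : ℝ) :
    (∫ p in Ioo a b ×ˢ Ioo c d, f p) = ∫ y in Ioo c d, ∫ x in Ioo a b, f (x, y) := by
  have hint : Integrable f ((volume.restrict (Ioo a b)).prod (volume.restrict (Ioo c d))) := by
    rw [Measure.prod_restrict]
    rw [← Measure.volume_eq_prod]
    exact cont_integrableOn_prod hf a b c d
  have hswap : Integrable (f ∘ Prod.swap)
      ((volume.restrict (Ioo c d)).prod (volume.restrict (Ioo a b))) := hint.swap
  calc (∫ p in Ioo a b ×ˢ Ioo c d, f p)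
      = ∫ p, f p ∂((volume.restrict (Ioo a b)).prod (volume.restrict (Ioo c d))) := by
        rw [Measure.prod_restrict, ← Measure.volume_eq_prod]
    _ = ∫ p, (f ∘ Prod.swap) p
          ∂((volume.restrict (Ioo c d)).prod (volume.restrict (Ioo a b))) := by
        exact (integral_prod_swap f).symm
    _ = ∫ y in Ioo c d, ∫ x in Ioo a b, f (x, y) := integral_prod _ hswap

lemma swap_fubini_integrable {f : ℝ × ℝ → ℝ} (hf : Continuous f) (a b c d : ℝ) :
    IntegrableOn (fun y => ∫ x in Ioo a b, f (x, y)) (Ioo c d) := by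
  have hint : Integrable f ((volume.restrict (Ioo a b)).prod (volume.restrict (Ioo c d))) := by
    rw [Measure.prod_restrict, ← Measure.volume_eq_prod]
    exact cont_integrableOn_prod hf a b c d
  exact hint.swap.integral_prod_left


lemma cont_integrableOn_ann {f : EuclideanSpace ℝ (Fin 2) → ℝ} (hf : Continuous f)
    (R₁ R₂ : ℝ) :
    IntegrableOn f {x : EuclideanSpace ℝ (Fin 2) | R₁ < ‖x‖ ∧ ‖x‖ < R₂} := by
  have hsub : {x : EuclideanSpace ℝ (Fin 2) | R₁ < ‖x‖ ∧ ‖x‖ < R₂}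
      ⊆ Metric.closedBall 0 R₂ := by
    intro x hx
    simp only [Metric.mem_closedBall, dist_zero_right]
    exact hx.2.le
  exact (hf.continuousOn.integrableOn_compact (isCompact_closedBall 0 R₂)).mono_set hsub

lemma cs_annulus (u : EuclideanSpace ℝ (Fin 2) → ℝ) (hu : ContDiff ℝ (⊤ : ℕ∞) u) (R₁ R₂ : ℝ) :
    (∫ x in {x : EuclideanSpace ℝ (Fin 2) | R₁ < ‖x‖ ∧ ‖x‖ < R₂},
        |u x| * ‖fderiv ℝ u x‖)
      ≤ Real.sqrt (∫ x in {x : EuclideanSpace ℝ (Fin 2) | R₁ < ‖x‖ ∧ ‖x‖ < R₂}, u x ^ 2)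
        * Real.sqrt (∫ x in {x : EuclideanSpace ℝ (Fin 2) | R₁ < ‖x‖ ∧ ‖x‖ < R₂},
            ‖fderiv ℝ u x‖ ^ 2) := by
  set Θ := {x : EuclideanSpace ℝ (Fin 2) | R₁ < ‖x‖ ∧ ‖x‖ < R₂}
  set μ := volume.restrict Θ
  have hpq : Real.HolderConjugate 2 2 := Real.HolderConjugate.two_two
  have hDc : Continuous fun x => ‖fderiv ℝ u x‖ := (hu.continuous_fderiv (by simp)).norm
  have hf : MemLp (fun x => |u x|) (ENNReal.ofReal 2) μ := by
    rw [show ENNReal.ofReal 2 = 2 by norm_num]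
    rw [memLp_two_iff_integrable_sq (hu.continuous.abs.aestronglyMeasurable.restrict)]
    have : (fun x => |u x| ^ 2) = fun x => u x ^ 2 := by funext x; rw [sq_abs]
    rw [this]
    exact cont_integrableOn_ann (hu.continuous.pow 2) R₁ R₂
  have hg : MemLp (fun x => ‖fderiv ℝ u x‖) (ENNReal.ofReal 2) μ := by
    rw [show ENNReal.ofReal 2 = 2 by norm_num]
    rw [memLp_two_iff_integrable_sq (hDc.aestronglyMeasurable.restrict)]
    exact cont_integrableOn_ann (hDc.pow 2) R₁ R₂
  have h := integral_mul_le_Lp_mul_Lq_of_nonneg hpq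
    (Filter.Eventually.of_forall fun x => abs_nonneg _)
    (Filter.Eventually.of_forall fun x => norm_nonneg _) hf hg
  have e1 : (∫ x, |u x| ^ (2:ℝ) ∂μ) = ∫ x, u x ^ 2 ∂μ := by
    congr 1; funext x
    rw [show ((2:ℝ)) = ((2:ℕ):ℝ) by norm_num, Real.rpow_natCast, sq_abs]
  have e2 : (∫ x, ‖fderiv ℝ u x‖ ^ (2:ℝ) ∂μ) = ∫ x, ‖fderiv ℝ u x‖ ^ 2 ∂μ := by
    congr 1; funext x
    rw [show ((2:ℝ)) = ((2:ℕ):ℝ) by norm_num, Real.rpow_natCast]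
  rw [e1, e2] at h
  have hA : (0:ℝ) ≤ ∫ x, u x ^ 2 ∂μ := integral_nonneg fun x => sq_nonneg _
  have hB : (0:ℝ) ≤ ∫ x, ‖fderiv ℝ u x‖ ^ 2 ∂μ := integral_nonneg fun x => sq_nonneg _
  rw [Real.sqrt_eq_rpow, Real.sqrt_eq_rpow]
  exact h

set_option maxHeartbeats 1000000 in
/-- Trace inequality on the inner circle of an annulus
`Θ = {R₁ < |x| < R₂} ⊂ ℝ²`: for smooth `u`,
`R₁(R₂−R₁)‖u‖²_{L²(∂Θ₁)} ≤ (R₂+2(R₂−R₁))‖u‖²_{L²(Θ)} + 2(R₂−R₁)R₂‖u‖_{L²(Θ)}‖∇u‖_{L²(Θ)}`,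
where the inner-circle `L²` norm is computed in the arc-length parametrization. -/
theorem annulus_inner_circle_trace_inequality
    (R₁ R₂ : ℝ) (hR₁ : 0 < R₁) (hR : R₁ < R₂)
    (u : EuclideanSpace ℝ (Fin 2) → ℝ) (hu : ContDiff ℝ (⊤ : ℕ∞) u)
    (Θ : Set (EuclideanSpace ℝ (Fin 2)))
    (hΘ : Θ = {x | R₁ < ‖x‖ ∧ ‖x‖ < R₂}) :
    R₁ * (R₂ - R₁) *
        (∫ θ in (0:ℝ)..(2 * π),
          u ((WithLp.equiv 2 (Fin 2 → ℝ)).symm ![R₁ * cos θ, R₁ * sin θ]) ^ 2 * R₁)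
      ≤ (R₂ + 2 * (R₂ - R₁)) * (∫ x in Θ, u x ^ 2)
        + 2 * (R₂ - R₁) * R₂ * Real.sqrt (∫ x in Θ, u x ^ 2) *
            Real.sqrt (∫ x in Θ, ‖fderiv ℝ u x‖ ^ 2) := by
  have hπ : (0:ℝ) < π := Real.pi_pos
  have hR₂ : 0 < R₂ := hR₁.trans hR
  have hd : (0:ℝ) ≤ R₂ - R₁ := by linarith
  have hDc : Continuous fun x => ‖fderiv ℝ u x‖ := (hu.continuous_fderiv (by simp)).norm
  have hcmap : Continuous fun p : ℝ × ℝ => myE (p.1 * Real.cos p.2, p.1 * Real.sin p.2) :=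
    myE_cont.comp ((continuous_fst.mul (Real.continuous_cos.comp continuous_snd)).prodMk
      (continuous_fst.mul (Real.continuous_sin.comp continuous_snd)))
  set P : ℝ × ℝ → ℝ :=
    fun p => p.1 * u (myE (p.1 * Real.cos p.2, p.1 * Real.sin p.2)) ^ 2 with hP
  set Q : ℝ × ℝ → ℝ :=
    fun p => p.1 * (|u (myE (p.1 * Real.cos p.2, p.1 * Real.sin p.2))|
      * ‖fderiv ℝ u (myE (p.1 * Real.cos p.2, p.1 * Real.sin p.2))‖) with hQ
  have hPc : Continuous P := continuous_fst.mul ((hu.continuous.comp hcmap).pow 2)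
  have hQc : Continuous Q :=
    continuous_fst.mul (((hu.continuous.comp hcmap).abs).mul (hDc.comp hcmap))
  set A := ∫ x in Θ, u x ^ 2 with hA
  set Bq := ∫ x in Θ, ‖fderiv ℝ u x‖ ^ 2 with hBq
  set C := ∫ x in Θ, |u x| * ‖fderiv ℝ u x‖ with hC
  have hA0 : 0 ≤ A := integral_nonneg fun x => sq_nonneg _
  have hC0 : 0 ≤ C := integral_nonneg fun x => mul_nonneg (abs_nonneg _) (norm_nonneg _)
  have hCS : C ≤ Real.sqrt A * Real.sqrt Bq := by
    rw [hA, hBq, hC, hΘ]; exact cs_annulus u hu R₁ R₂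
  have hPA : A = ∫ p in Ioo R₁ R₂ ×ˢ Ioo (-π) π, P p := by
    rw [hA, hΘ]; exact polar_set_integral R₁ R₂ hR₁ (fun x => u x ^ 2)
  have hQC : C = ∫ p in Ioo R₁ R₂ ×ˢ Ioo (-π) π, Q p := by
    rw [hC, hΘ]; exact polar_set_integral R₁ R₂ hR₁ (fun x => |u x| * ‖fderiv ℝ u x‖)
  have hPfub : (∫ p in Ioo R₁ R₂ ×ˢ Ioo (-π) π, P p)
      = ∫ θ in Ioo (-π) π, ∫ r in Ioo R₁ R₂, P (r, θ) := swap_fubini hPc _ _ _ _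
  have hQfub : (∫ p in Ioo R₁ R₂ ×ˢ Ioo (-π) π, Q p)
      = ∫ θ in Ioo (-π) π, ∫ s in Ioo R₁ R₂, Q (s, θ) := swap_fubini hQc _ _ _ _
  have hμIoo : volume (Ioo R₁ R₂) ≠ ⊤ := (measure_Ioo_lt_top).ne
  have hvol : (volume (Ioo R₁ R₂)).toReal = R₂ - R₁ := by
    rw [Real.volume_Ioo, ENNReal.toReal_ofReal hd]
  -- the per-θ estimate
  have claim : ∀ θ : ℝ,
      (R₂ - R₁) * (R₁ * u (myE (R₁ * Real.cos θ, R₁ * Real.sin θ)) ^ 2)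
        ≤ (∫ r in Ioo R₁ R₂, P (r, θ)) + 2 * (R₂ - R₁) * ∫ s in Ioo R₁ R₂, Q (s, θ) := by
    intro θ
    set W := ∫ s in R₁..R₂, 2 * |u (myE (s * Real.cos θ, s * Real.sin θ))|
        * ‖fderiv ℝ u (myE (s * Real.cos θ, s * Real.sin θ))‖ with hW
    have hPθc : Continuous fun r => P (r, θ) :=
      hPc.comp (continuous_id.prodMk continuous_const)
    have hQθc : Continuous fun s => Q (s, θ) :=
      hQc.comp (continuous_id.prodMk continuous_const)
    have hPint : IntegrableOn (fun r => P (r, θ)) (Ioo R₁ R₂) :=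
      (hPθc.continuousOn.integrableOn_compact isCompact_Icc).mono_set Ioo_subset_Icc_self
    have hQint : IntegrableOn (fun s => Q (s, θ)) (Ioo R₁ R₂) :=
      (hQθc.continuousOn.integrableOn_compact isCompact_Icc).mono_set Ioo_subset_Icc_self
    have hrb : ∀ r ∈ Ioo R₁ R₂,
        R₁ * u (myE (R₁ * Real.cos θ, R₁ * Real.sin θ)) ^ 2 ≤ P (r, θ) + R₁ * W := by
      intro r hr
      have h := ray_bound u hu R₁ R₂ hR₁ θ r hr.1.le hr.2.le
      rw [← hW] at h
      have h1 := mul_le_mul_of_nonneg_left h hR₁.le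
      have h2 : R₁ * u (myE (r * Real.cos θ, r * Real.sin θ)) ^ 2
          ≤ r * u (myE (r * Real.cos θ, r * Real.sin θ)) ^ 2 :=
        mul_le_mul_of_nonneg_right hr.1.le (sq_nonneg _)
      have hPval : P (r, θ) = r * u (myE (r * Real.cos θ, r * Real.sin θ)) ^ 2 := rfl
      rw [hPval]; nlinarith [h1, h2]
    have hb : (R₂ - R₁) * (R₁ * u (myE (R₁ * Real.cos θ, R₁ * Real.sin θ)) ^ 2)
        ≤ (∫ r in Ioo R₁ R₂, P (r, θ)) + (R₂ - R₁) * (R₁ * W) := by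
      have hconst₁ : IntegrableOn
          (fun _ : ℝ => R₁ * u (myE (R₁ * Real.cos θ, R₁ * Real.sin θ)) ^ 2)
          (Ioo R₁ R₂) := integrableOn_const measure_Ioo_lt_top.ne
      have hconst₂ : IntegrableOn (fun _ : ℝ => R₁ * W) (Ioo R₁ R₂) :=
        integrableOn_const measure_Ioo_lt_top.ne
      have hmono := setIntegral_mono_on hconst₁ (hPint.add hconst₂) measurableSet_Ioo hrb
      simp only [Pi.add_apply] at hmono
      rw [setIntegral_const, integral_add hPint hconst₂, setIntegral_const, measureReal_def, hvol,
        smul_eq_mul, smul_eq_mul] at hmono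
      linarith
    have hWQ : R₁ * W ≤ 2 * ∫ s in Ioo R₁ R₂, Q (s, θ) := by
      have hWset : W = ∫ s in Ioo R₁ R₂, 2 * |u (myE (s * Real.cos θ, s * Real.sin θ))|
          * ‖fderiv ℝ u (myE (s * Real.cos θ, s * Real.sin θ))‖ := by
        rw [hW, intervalIntegral.integral_of_le hR.le, integral_Ioc_eq_integral_Ioo]
      have hkc : Continuous fun s : ℝ => R₁ * (2 * |u (myE (s * Real.cos θ, s * Real.sin θ))|
          * ‖fderiv ℝ u (myE (s * Real.cos θ, s * Real.sin θ))‖) := by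
        have hsc : Continuous fun s : ℝ => myE (s * Real.cos θ, s * Real.sin θ) :=
          hcmap.comp (continuous_id.prodMk continuous_const)
        exact continuous_const.mul ((continuous_const.mul
          ((hu.continuous.comp hsc).abs)).mul ((hDc.comp hsc)))
      have hkint : IntegrableOn
          (fun s : ℝ => R₁ * (2 * |u (myE (s * Real.cos θ, s * Real.sin θ))|
            * ‖fderiv ℝ u (myE (s * Real.cos θ, s * Real.sin θ))‖)) (Ioo R₁ R₂) :=
        (hkc.continuousOn.integrableOn_compact isCompact_Icc).mono_set Ioo_subset_Icc_self
      have hmono := setIntegral_mono_on hkint (hQint.const_mul 2) measurableSet_Ioo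
        (fun s hs => by
          have hQval : Q (s, θ) = s * (|u (myE (s * Real.cos θ, s * Real.sin θ))|
            * ‖fderiv ℝ u (myE (s * Real.cos θ, s * Real.sin θ))‖) := rfl
          rw [hQval]
          have hs1 : R₁ ≤ s := hs.1.le
          nlinarith [abs_nonneg (u (myE (s * Real.cos θ, s * Real.sin θ))),
            norm_nonneg (fderiv ℝ u (myE (s * Real.cos θ, s * Real.sin θ))),
            mul_nonneg (abs_nonneg (u (myE (s * Real.cos θ, s * Real.sin θ))))
              (norm_nonneg (fderiv ℝ u (myE (s * Real.cos θ, s * Real.sin θ))))])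
      rw [integral_const_mul, integral_const_mul] at hmono
      calc R₁ * W = R₁ * ∫ s in Ioo R₁ R₂, 2 * |u (myE (s * Real.cos θ, s * Real.sin θ))|
            * ‖fderiv ℝ u (myE (s * Real.cos θ, s * Real.sin θ))‖ := by rw [hWset]
        _ ≤ 2 * ∫ s in Ioo R₁ R₂, Q (s, θ) := by
            rw [← integral_const_mul] at hmono ⊢
            exact hmono
    have := mul_le_mul_of_nonneg_left hWQ hd
    linarith
  -- integrate the claim over θ
  have hLc : Continuous fun θ : ℝ =>
      (R₂ - R₁) * (R₁ * u (myE (R₁ * Real.cos θ, R₁ * Real.sin θ)) ^ 2) := by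
    have hsc : Continuous fun θ : ℝ => myE (R₁ * Real.cos θ, R₁ * Real.sin θ) :=
      myE_cont.comp ((continuous_const.mul Real.continuous_cos).prodMk
        (continuous_const.mul Real.continuous_sin))
    exact continuous_const.mul (continuous_const.mul ((hu.continuous.comp hsc).pow 2))
  have hLint : IntegrableOn (fun θ : ℝ =>
      (R₂ - R₁) * (R₁ * u (myE (R₁ * Real.cos θ, R₁ * Real.sin θ)) ^ 2)) (Ioo (-π) π) :=
    (hLc.continuousOn.integrableOn_compact isCompact_Icc).mono_set Ioo_subset_Icc_self
  have hPthint : IntegrableOn (fun θ => ∫ r in Ioo R₁ R₂, P (r, θ)) (Ioo (-π) π) :=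
    swap_fubini_integrable hPc _ _ _ _
  have hQthint : IntegrableOn (fun θ => ∫ s in Ioo R₁ R₂, Q (s, θ)) (Ioo (-π) π) :=
    swap_fubini_integrable hQc _ _ _ _
  have big := setIntegral_mono_on hLint
    (hPthint.add (hQthint.const_mul (2 * (R₂ - R₁)))) measurableSet_Ioo
    (fun θ _ => claim θ)
  simp only [Pi.add_apply] at big
  rw [integral_add hPthint (hQthint.const_mul (2 * (R₂ - R₁)))] at big
  set J := ∫ θ in Ioo (-π) π, u (myE (R₁ * Real.cos θ, R₁ * Real.sin θ)) ^ 2 with hJ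
  have e1 : (∫ θ in Ioo (-π) π,
      (R₂ - R₁) * (R₁ * u (myE (R₁ * Real.cos θ, R₁ * Real.sin θ)) ^ 2))
      = (R₂ - R₁) * (R₁ * J) := by
    rw [integral_const_mul, integral_const_mul]
  have e2 : (∫ θ in Ioo (-π) π, 2 * (R₂ - R₁) * ∫ s in Ioo R₁ R₂, Q (s, θ))
      = 2 * (R₂ - R₁) * C := by
    rw [integral_const_mul, ← hQfub, ← hQC]
  rw [e1, e2, ← hPfub, ← hPA] at big
  -- core: (R₂ - R₁) * R₁ * J ≤ A + 2 * (R₂ - R₁) * C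
  -- transform the goal's interval integral
  have hgoalInt : (∫ θ in (0:ℝ)..(2 * π),
      u ((WithLp.equiv 2 (Fin 2 → ℝ)).symm ![R₁ * cos θ, R₁ * sin θ]) ^ 2 * R₁) = J * R₁ := by
    have e0 : (∫ θ in (0:ℝ)..(2 * π),
        u ((WithLp.equiv 2 (Fin 2 → ℝ)).symm ![R₁ * cos θ, R₁ * sin θ]) ^ 2 * R₁)
        = (∫ θ in (0:ℝ)..(2 * π),
            u (myE (R₁ * Real.cos θ, R₁ * Real.sin θ)) ^ 2) * R₁ := by
      rw [← intervalIntegral.integral_mul_const]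
      simp only [myE_apply]
    rw [e0]
    congr 1
    have hper : Function.Periodic
        (fun θ => u (myE (R₁ * Real.cos θ, R₁ * Real.sin θ)) ^ 2) (2 * π) := by
      intro θ
      simp only [Real.cos_add_two_pi, Real.sin_add_two_pi]
    have := hper.intervalIntegral_add_eq 0 (-π)
    rw [zero_add, show -π + 2 * π = π by ring] at this
    rw [this, intervalIntegral.integral_of_le (by linarith : -π ≤ π),
      integral_Ioc_eq_integral_Ioo]
  rw [hgoalInt]
  -- final arithmetic
  have m1 := mul_le_mul_of_nonneg_left big hR₁.le
  have m2 : R₁ * A ≤ (R₂ + 2 * (R₂ - R₁)) * A :=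
    mul_le_mul_of_nonneg_right (by linarith) hA0
  have m3 : 2 * (R₂ - R₁) * R₁ * C ≤ 2 * (R₂ - R₁) * R₂ * (Real.sqrt A * Real.sqrt Bq) := by
    have h1 : 2 * (R₂ - R₁) * R₁ ≤ 2 * (R₂ - R₁) * R₂ := by nlinarith
    exact mul_le_mul h1 hCS hC0 (by positivity)
  nlinarith [m1, m2, m3]
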